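/- Let n ≥ 2. Every facet of Δ_n (i.e., every maximal subset of {x_i, y_i, z_i : 1 ≤ i ≤ n} containing no triple {x_i, y_i, z_j} with 1 ≤ i < j ≤ n) has exactly 2n + 1 elements. In particular, Δ_n is a pure simplicial complex of dimension 2n. -/
import Mathlib


/-- A subset of the vertex set `{xᵢ, yᵢ, zᵢ : 1 ≤ i ≤ n}` (identified with
`Fin n × Fin 3`, where `(i,0) = xᵢ`, `(i,1) = yᵢ`, `(i,2) = zᵢ`) is a face of `Δₙ`
iff it contains no triple `{xᵢ, yᵢ, z_j}` with `i < j`. -/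
def IsFaceOf (n : ℕ) (F : Finset (Fin n × Fin 3)) : Prop :=
  ¬ ∃ i j : Fin n, i < j ∧ (i, 0) ∈ F ∧ (i, 1) ∈ F ∧ (j, 2) ∈ F

/-- A facet of `Δₙ` is a maximal face. -/
def IsFacetOf (n : ℕ) (F : Finset (Fin n × Fin 3)) : Prop :=
  IsFaceOf n F ∧ ∀ G : Finset (Fin n × Fin 3), IsFaceOf n G → F ⊆ G → F = G

lemma card_filter_triple {α} [DecidableEq α] (a b c : α) (hab : a ≠ b) (hac : a ≠ c)
    (hbc : b ≠ c) (P : α → Prop) [DecidablePred P] :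
    (({a,b,c} : Finset α).filter P).card =
      (if P a then 1 else 0) + (if P b then 1 else 0) + (if P c then 1 else 0) := by
  rw [Finset.filter_insert, Finset.filter_insert, Finset.filter_singleton]
  split_ifs <;>
    simp_all [Finset.card_insert_of_notMem, hab, hac, hbc]


/-- Every facet of `Δₙ` has exactly `2n + 1` elements; in particular `Δₙ` is pure
of dimension `2n`. -/
theorem stmt_3 (n : ℕ) (hn : 2 ≤ n) (F : Finset (Fin n × Fin 3)) (hF : IsFacetOf n F) :
    F.card = 2 * n + 1 := by
  obtain ⟨hface, hmax⟩ := hF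
  -- there is an index where both x and y are in F
  have hSne : ∃ i : Fin n, (i, (0:Fin 3)) ∈ F ∧ (i, (1:Fin 3)) ∈ F := by
    by_contra hemp
    push_neg at hemp
    have ht : 0 < n := by omega
    set t : Fin n := ⟨n - 1, by omega⟩ with htdef
    have hGface : IsFaceOf n (insert ((t,0) : Fin n × Fin 3) (insert (t,1) F)) := by
      rintro ⟨i, j, hij, h0, h1, h2⟩
      have h2' : (j, (2:Fin 3)) ∈ F := by
        simp only [Finset.mem_insert, Prod.ext_iff] at h2
        rcases h2 with ⟨_, h⟩ | ⟨_, h⟩ | h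
        · exact absurd h (by decide)
        · exact absurd h (by decide)
        · exact h
      have hjt : j.val ≤ n - 1 := by omega
      simp only [Finset.mem_insert, Prod.ext_iff] at h0 h1
      rcases h0 with ⟨hit, _⟩ | ⟨_, h⟩ | h
      · have := Fin.lt_iff_val_lt_val.mp hij
        rw [hit] at this
        simp [htdef] at this
        omega
      · exact absurd h (by decide)
      · rcases h1 with ⟨_, h'⟩ | ⟨hit, _⟩ | h'
        · exact absurd h' (by decide)
        · have := Fin.lt_iff_val_lt_val.mp hij
          rw [hit] at this
          simp [htdef] at this
          omega
        · exact hface ⟨i, j, hij, h, h', h2'⟩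
    have hFG := hmax _ hGface
      (fun p hp => Finset.mem_insert_of_mem (Finset.mem_insert_of_mem hp))
    refine hemp t ?_ ?_
    · rw [hFG]; exact Finset.mem_insert_self _ _
    · rw [hFG]; exact Finset.mem_insert_of_mem (Finset.mem_insert_self _ _)
  obtain ⟨k, hk0, hk1, hkmin⟩ : ∃ k : Fin n, (k, (0:Fin 3)) ∈ F ∧ (k, (1:Fin 3)) ∈ F ∧
      ∀ i : Fin n, (i,0) ∈ F → (i,1) ∈ F → k ≤ i := by
    obtain ⟨i₀, h₀⟩ := hSne
    have hne : (Finset.univ.filter (fun i : Fin n => (i, (0:Fin 3)) ∈ F ∧ (i, (1:Fin 3)) ∈ F)).Nonempty :=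
      ⟨i₀, by simp [h₀.1, h₀.2]⟩
    refine ⟨Finset.min' _ hne, ?_, ?_, ?_⟩
    · have := Finset.min'_mem _ hne
      simp only [Finset.mem_filter] at this
      exact this.2.1
    · have := Finset.min'_mem _ hne
      simp only [Finset.mem_filter] at this
      exact this.2.2
    · intro i h0 h1
      exact Finset.min'_le _ i (by simp [h0, h1])
  -- (a1) z_j ∉ F for j > k
  have ha1 : ∀ j : Fin n, k < j → (j, (2:Fin 3)) ∉ F := by
    intro j hj h2
    exact hface ⟨k, j, hj, hk0, hk1, h2⟩
  -- (a2) z_j ∈ F for j ≤ k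
  have ha2 : ∀ j : Fin n, j ≤ k → (j, (2:Fin 3)) ∈ F := by
    intro j hj
    have hGface : IsFaceOf n (insert ((j,2) : Fin n × Fin 3) F) := by
      rintro ⟨i, j', hij, h0, h1, h2⟩
      simp only [Finset.mem_insert, Prod.ext_iff] at h0 h1 h2
      rcases h0 with ⟨_, h⟩ | h
      · exact absurd h (by decide)
      rcases h1 with ⟨_, h'⟩ | h'
      · exact absurd h' (by decide)
      have hki : k ≤ i := hkmin i h h'
      rcases h2 with ⟨hjj, _⟩ | h''
      · subst hjj
        exact absurd hij (not_lt_of_ge (le_trans hj hki))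
      · exact hface ⟨i, j', hij, h, h', h''⟩
    have hFG := hmax _ hGface (Finset.subset_insert _ _)
    rw [hFG]; exact Finset.mem_insert_self _ _
  -- (b) x_i, y_i ∈ F for i ≥ k
  have hb : ∀ i : Fin n, k ≤ i → (i, (0:Fin 3)) ∈ F ∧ (i, (1:Fin 3)) ∈ F := by
    intro i hi
    have hGface : IsFaceOf n (insert ((i,0) : Fin n × Fin 3) (insert (i,1) F)) := by
      rintro ⟨i', j, hij, h0, h1, h2⟩
      have h2' : (j, (2:Fin 3)) ∈ F := by
        simp only [Finset.mem_insert, Prod.ext_iff] at h2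
        rcases h2 with ⟨_, h⟩ | ⟨_, h⟩ | h
        · exact absurd h (by decide)
        · exact absurd h (by decide)
        · exact h
      have hjk : j ≤ k := le_of_not_gt (fun hc => ha1 j hc h2')
      simp only [Finset.mem_insert, Prod.ext_iff] at h0 h1
      rcases h0 with ⟨hii, _⟩ | ⟨_, h⟩ | h
      · subst hii
        exact absurd hij (not_lt_of_ge (le_trans hjk hi))
      · exact absurd h (by decide)
      · rcases h1 with ⟨_, h'⟩ | ⟨hii, _⟩ | h'
        · exact absurd h' (by decide)
        · subst hii
          exact absurd hij (not_lt_of_ge (le_trans hjk hi))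
        · exact absurd hij (not_lt_of_ge (le_trans hjk (hkmin i' h h')))
    have hFG := hmax _ hGface
      (fun p hp => Finset.mem_insert_of_mem (Finset.mem_insert_of_mem hp))
    constructor
    · rw [hFG]; exact Finset.mem_insert_self _ _
    · rw [hFG]; exact Finset.mem_insert_of_mem (Finset.mem_insert_self _ _)
  -- (c) for i < k: one of x_i, y_i (not both, since k minimal)
  have hc1 : ∀ i : Fin n, i < k → ¬ ((i,(0:Fin 3)) ∈ F ∧ (i,(1:Fin 3)) ∈ F) := by
    rintro i hi ⟨h0, h1⟩
    exact absurd (hkmin i h0 h1) (not_le_of_gt hi)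
  have hc2 : ∀ i : Fin n, i < k → ((i,(0:Fin 3)) ∈ F ∨ (i,(1:Fin 3)) ∈ F) := by
    intro i hi
    by_contra hc
    push_neg at hc
    obtain ⟨h0, h1⟩ := hc
    have hGface : IsFaceOf n (insert ((i,0) : Fin n × Fin 3) F) := by
      rintro ⟨i', j, hij, g0, g1, g2⟩
      simp only [Finset.mem_insert, Prod.ext_iff] at g0 g1 g2
      have g1' : (i', (1:Fin 3)) ∈ F := by
        rcases g1 with ⟨_, h⟩ | h
        · exact absurd h (by decide)
        · exact h
      have g2' : (j, (2:Fin 3)) ∈ F := by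
        rcases g2 with ⟨_, h⟩ | h
        · exact absurd h (by decide)
        · exact h
      rcases g0 with ⟨hii, _⟩ | h
      · subst hii; exact h1 g1'
      · exact hface ⟨i', j, hij, h, g1', g2'⟩
    have hFG := hmax _ hGface (Finset.subset_insert _ _)
    exact h0 (by rw [hFG]; exact Finset.mem_insert_self _ _)
  -- counting
  have hfiber : F.card = ∑ i : Fin n, (F.filter (fun p => p.1 = i)).card :=
    Finset.card_eq_sum_card_fiberwise (fun p _ => Finset.mem_univ p.1)
  have hcol : ∀ i : Fin n, (F.filter (fun p => p.1 = i)) =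
      (({(i,0),(i,1),(i,2)} : Finset (Fin n × Fin 3)).filter (· ∈ F)) := by
    intro i
    ext ⟨a, b⟩
    simp only [Finset.mem_filter, Finset.mem_insert, Finset.mem_singleton]
    constructor
    · rintro ⟨hmem, rfl⟩
      refine ⟨?_, hmem⟩
      fin_cases b
      · exact Or.inl rfl
      · exact Or.inr (Or.inl rfl)
      · exact Or.inr (Or.inr rfl)
    · rintro ⟨h, hmem⟩
      refine ⟨hmem, ?_⟩
      rcases h with h | h | h <;> exact congrArg Prod.fst h
  have hcolcard : ∀ i : Fin n, (F.filter (fun p => p.1 = i)).card =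
      (if (i,(0:Fin 3)) ∈ F then 1 else 0) + (if (i,(1:Fin 3)) ∈ F then 1 else 0) +
      (if (i,(2:Fin 3)) ∈ F then 1 else 0) := by
    intro i
    rw [hcol i]
    exact card_filter_triple _ _ _ (by simp) (by simp) (by simp) _
  have hval : ∀ i : Fin n, (F.filter (fun p => p.1 = i)).card =
      2 + (if i = k then 1 else 0) := by
    intro i
    rw [hcolcard i]
    rcases lt_trichotomy i k with h | h | h
    · have hz := ha2 i (le_of_lt h)
      have hnot := hc1 i h
      rcases hc2 i h with h0 | h1
      · have h1' : (i,(1:Fin 3)) ∉ F := fun hh => hnot ⟨h0, hh⟩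
        simp [h0, h1', hz, Fin.ne_of_lt h]
      · have h0' : (i,(0:Fin 3)) ∉ F := fun hh => hnot ⟨hh, h1⟩
        simp [h1, h0', hz, Fin.ne_of_lt h]
    · subst h
      simp [hk0, hk1, ha2 i le_rfl]
    · have hxy := hb i (le_of_lt h)
      have hz := ha1 i h
      simp [hxy.1, hxy.2, hz, Fin.ne_of_gt h]
  rw [hfiber, Finset.sum_congr rfl (fun i _ => hval i), Finset.sum_add_distrib,
    Finset.sum_const, Finset.sum_ite_eq' Finset.univ k (fun _ => 1)]
  simp only [Finset.card_univ, Fintype.card_fin, smul_eq_mul, Finset.mem_univ, if_true]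
  omega
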